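/- Let R be a commutative Noetherian local ring which possesses a nonzero finitely generated injective R-module. Then R is an Artinian ring. -/

import Mathlib

/-!
Injectivity of `E` means: if `Ann(b) ⊆ Ann(e)` then `e ∈ bE`. For `a` in the maximal ideal `𝔪`
the annihilators `Ann(aⁿ)` stabilise, so `aⁿE ⊆ aⁿ⁺¹E = a · aⁿE` and Nakayama gives `aⁿE = 0`.
Hence an associated prime of `E` contains, so equals, `𝔪`: some `x₀ ≠ 0` is killed by `𝔪`. If now
`b ≠ 0` kills `E`, then `Ann(b) ⊆ 𝔪 ⊆ Ann(x₀)`, so `x₀ ∈ bE = 0`. Thus every element of `𝔪` is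
nilpotent, and a Noetherian local ring with nilpotent maximal ideal is Artinian.
-/

open IsLocalRing

universe u

section

variable {R : Type u} [CommRing R] {E : Type u} [AddCommGroup E] [Module R E]

theorem Module.Injective.exists_eq_smul_of_forall_mul_eq_zero [Module.Injective R E] {b : R}
    {e : E} (h : ∀ x : R, x * b = 0 → x • e = 0) : ∃ u : E, e = b • u := by
  let μ := LinearMap.toSpanSingleton R R b
  have hker : LinearMap.ker μ ≤ LinearMap.ker (LinearMap.toSpanSingleton R E e) :=
    fun x hx ↦ h x hx
  -- `r ↦ r • b` embeds `R ⧸ Ann(b)` in `R`; extend `r ↦ r • e` along it.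
  obtain ⟨g, hg⟩ := Module.Injective.out ((LinearMap.ker μ).liftQ μ le_rfl)
    (LinearMap.ker_eq_bot.mp (Submodule.ker_liftQ_eq_bot _ _ _ le_rfl))
    ((LinearMap.ker μ).liftQ _ hker)
  have hg1 := hg (Submodule.Quotient.mk 1)
  rw [Submodule.liftQ_apply, Submodule.liftQ_apply] at hg1
  refine ⟨g 1, ?_⟩
  simpa [μ, ← map_smul] using hg1.symm

theorem IsNoetherianRing.exists_mul_pow_eq_zero_of_mul_pow_succ_eq_zero [IsNoetherianRing R]
    (a : R) : ∃ n : ℕ, ∀ x : R, x * a ^ (n + 1) = 0 → x * a ^ n = 0 := by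
  obtain ⟨n, hn⟩ := monotone_stabilizes_iff_noetherian.mpr inferInstance
    (LinearMap.mulRight R a).iterateKer
  refine ⟨n, fun x hx ↦ ?_⟩
  have hx' : x ∈ (LinearMap.mulRight R a).iterateKer (n + 1) := by
    simpa [LinearMap.pow_mulRight] using hx
  rw [← hn _ n.le_succ] at hx'
  simpa [LinearMap.pow_mulRight] using hx'

theorem Module.Injective.exists_pow_smul_eq_zero [IsNoetherianRing R] [Module.Finite R E]
    [Module.Injective R E] {a : R} (ha : a ∈ Ideal.jacobson ⊥) :
    ∃ n : ℕ, ∀ e : E, a ^ n • e = 0 := by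
  obtain ⟨n, hn⟩ := IsNoetherianRing.exists_mul_pow_eq_zero_of_mul_pow_succ_eq_zero a
  let N := LinearMap.range (LinearMap.lsmul R E (a ^ n))
  have hN : N ≤ Ideal.span {a} • N := by
    rintro _ ⟨e, rfl⟩
    obtain ⟨u, hu⟩ := Module.Injective.exists_eq_smul_of_forall_mul_eq_zero (b := a ^ (n + 1))
      (e := a ^ n • e) fun x hx ↦ by rw [smul_smul, hn x hx, zero_smul]
    rw [LinearMap.lsmul_apply, hu, pow_succ', mul_smul]
    exact Submodule.smul_mem_smul (Ideal.mem_span_singleton_self a) ⟨u, rfl⟩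
  have hbot : N = ⊥ := Submodule.eq_bot_of_le_smul_of_le_jacobson_bot _ N
    (IsNoetherian.noetherian N) hN (by rwa [Ideal.span_singleton_le_iff_mem])
  exact ⟨n, fun e ↦ (Submodule.mem_bot R).mp (hbot ▸ LinearMap.mem_range_self _ e)⟩

theorem Module.Injective.eq_zero_of_forall_smul_eq_zero [IsLocalRing R] [Module.Injective R E]
    {x₀ : E} (hx₀ : x₀ ≠ 0) (hm : ∀ x ∈ maximalIdeal R, x • x₀ = 0) {b : R}
    (hb : ∀ e : E, b • e = 0) : b = 0 := by
  by_contra hb0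
  obtain ⟨u, hu⟩ := Module.Injective.exists_eq_smul_of_forall_mul_eq_zero (b := b) (e := x₀)
    fun x hx ↦ hm x fun hxu ↦ hb0 (hxu.mul_right_eq_zero.mp hx)
  exact hx₀ (hu.trans (hb u))

end

theorem IsLocalRing.exists_ne_zero_forall_mem_maximalIdeal_smul_eq_zero {R : Type*} [CommRing R]
    [IsLocalRing R] [IsNoetherianRing R] {E : Type*} [AddCommGroup E] [Module R E] [Nontrivial E]
    (h : ∀ a ∈ maximalIdeal R, ∃ n : ℕ, ∀ e : E, a ^ n • e = 0) :
    ∃ x₀ : E, x₀ ≠ 0 ∧ ∀ x ∈ maximalIdeal R, x • x₀ = 0 := by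
  obtain ⟨p, hp⟩ := associatedPrimes.nonempty R E
  obtain ⟨hprime, x₀, rfl⟩ := isAssociatedPrime_iff.mp hp
  refine ⟨x₀, ?_, fun a ha ↦ ?_⟩
  · rintro rfl
    exact hprime.ne_top (by ext; simp [Submodule.mem_colon_singleton])
  · obtain ⟨n, hn⟩ := h a ha
    simpa [Submodule.mem_colon_singleton] using
      hprime.mem_of_pow_mem n (by simpa [Submodule.mem_colon_singleton] using hn x₀)

/-- A commutative Noetherian local ring possessing a nonzero finitely
generated injective module is Artinian. -/
theorem stmt1 (R : Type) [CommRing R] [IsLocalRing R] [IsNoetherianRing R]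
    (E : Type) [AddCommGroup E] [Module R E] [Nontrivial E] [Module.Finite R E]
    (hE : Module.Injective R E) :
    IsArtinianRing R := by
  have hpow : ∀ a ∈ maximalIdeal R, ∃ n : ℕ, ∀ e : E, a ^ n • e = 0 := fun a ha ↦
    Module.Injective.exists_pow_smul_eq_zero (by rwa [jacobson_eq_maximalIdeal ⊥ bot_ne_top])
  obtain ⟨x₀, hx₀, hmx₀⟩ := exists_ne_zero_forall_mem_maximalIdeal_smul_eq_zero hpow
  rw [isArtinianRing_iff_isNilpotent_maximalIdeal,
    Ideal.FG.isNilpotent_iff_le_nilradical (IsNoetherian.noetherian _)]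
  intro a ha
  obtain ⟨n, hn⟩ := hpow a ha
  exact ⟨n, Module.Injective.eq_zero_of_forall_smul_eq_zero hx₀ hmx₀ hn⟩
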